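/- arXiv:2505.23348 — 4 statements merged into one kernel-verified Lean document; each statement's English description precedes it below -/
import Mathlib

section
/- Let n ≥ 3, let Ω ⊆ ℝⁿ be an open connected set, and let u ∈ C^∞(Ω;ℝⁿ) satisfy ℰ_d u = 0 on Ω. Then there exist an n×n skew-symmetric real matrix A, a real number γ, and vectors s, b ∈ ℝⁿ such that u(y) = (A + γ·Id)y + s·|y|²/2 − (s·y)y + b for all y ∈ Ω. -/
open MeasureTheory Filter Topology

/-- `∂_j u_i (x)`: the `i`-th component of the partial derivative of `u` in direction `e_j`. -/
noncomputable def pdc {n : ℕ} (j i : Fin n) (u : (Fin n → ℝ) → (Fin n → ℝ))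
    (x : Fin n → ℝ) : ℝ :=
  fderiv ℝ u x (Pi.single j 1) i

/-- Divergence of a vector field. -/
noncomputable def divg {n : ℕ} (u : (Fin n → ℝ) → (Fin n → ℝ)) (x : Fin n → ℝ) : ℝ :=
  ∑ i, pdc i i u x

/-- The deviatoric symmetric gradient
`ℰ_d u := (∇u + (∇u)ᵀ)/2 − (div u / n)·Id`, as an `n × n` matrix field. -/
noncomputable def Ed {n : ℕ} (u : (Fin n → ℝ) → (Fin n → ℝ)) (x : Fin n → ℝ)
    (i j : Fin n) : ℝ :=
  (pdc j i u x + pdc i j u x) / 2 - (divg u x / (n : ℝ)) * (if i = j then 1 else 0)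

/-!
Writing `φ = div u / n`, the equation `ℰ_d u = 0` reads `∂ⱼuᵢ + ∂ᵢuⱼ = 2 δᵢⱼ φ`. Differentiating
once and using the symmetry of second derivatives expresses every second derivative of `u`
through `∇φ`: `∂ₖ∂ⱼuᵢ = δᵢⱼ ∂ₖφ + δᵢₖ ∂ⱼφ - δⱼₖ ∂ᵢφ`. Differentiating once more, the symmetry of
`∂ₗ∂ₖ` forces the Hessian of `φ` to vanish as soon as three distinct indices are available
(`n ≥ 3`). So `∇φ = -s` is constant on the connected set `Ω`, `∇u` is affine, and `u` is the
quadratic field of the statement.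
-/

open scoped ContDiff

section Algebra
variable {ι : Type*} [DecidableEq ι]

lemma exists_ne_ne_of_three_le_card [Fintype ι] (h : 3 ≤ Fintype.card ι) (a b : ι) :
    ∃ c, c ≠ a ∧ c ≠ b := by
  have hlt : ({a, b} : Finset ι).card < (Finset.univ : Finset ι).card :=
    Finset.card_le_two.trans_lt (by rw [Finset.card_univ]; omega)
  obtain ⟨c, -, hc⟩ := Finset.exists_mem_notMem_of_card_lt_card hlt
  simp only [Finset.mem_insert, Finset.mem_singleton, not_or] at hc
  exact ⟨c, hc⟩

lemma apply_eq_of_symm_of_add_swap {S : ι → ι → ι → ℝ} {g : ι → ℝ}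
    (hS : ∀ k j i, S k j i = S j k i)
    (h : ∀ k j i, S k j i + S k i j = 2 * (if i = j then 1 else 0) * g k) (k j i : ι) :
    S k j i = (if i = j then 1 else 0) * g k + (if i = k then 1 else 0) * g j
      - (if j = k then 1 else 0) * g i := by
  -- `(S k j i + S k i j) + (S j k i + S j i k) - (S i k j + S i j k) = 2 S k j i` by `hS`
  linarith [h k j i, h j k i, h i k j, hS k i j, hS j i k, hS j k i]

lemma eq_zero_of_symm_kronecker [Fintype ι] (h3 : 3 ≤ Fintype.card ι) {H : ι → ι → ℝ}
    (h : ∀ l k j i : ι,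
      (if i = j then 1 else 0) * H l k + (if i = k then 1 else 0) * H l j
        - (if j = k then 1 else 0) * H l i
      = (if i = j then 1 else 0) * H k l + (if i = l then 1 else 0) * H k j
        - (if j = l then 1 else 0) * H k i) (a b : ι) :
    H a b = 0 := by
  rcases eq_or_ne a b with rfl | hab
  · -- `H a a = -H c c = H d d = -H a a` for distinct `a, c, d`
    obtain ⟨c, hca, -⟩ := exists_ne_ne_of_three_le_card h3 a a
    obtain ⟨d, hda, hdc⟩ := exists_ne_ne_of_three_le_card h3 a c
    have hac := h a c c a
    have hcd := h c d d c
    have had := h a d d a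
    simp only [if_true, if_neg hca, if_neg hca.symm, if_neg hda, if_neg hda.symm, if_neg hdc,
      if_neg hdc.symm] at hac hcd had
    linarith
  · obtain ⟨c, hca, hcb⟩ := exists_ne_ne_of_three_le_card h3 a b
    have habc := h a c c b
    simp only [if_true, if_neg hca, if_neg hcb.symm, if_neg hab.symm] at habc
    linarith

end Algebra

section PartialDeriv
variable {ι : Type*} [DecidableEq ι] {F : Type*} [NormedAddCommGroup F] [NormedSpace ℝ F]
  {f g : (ι → ℝ) → F} {Ω : Set (ι → ℝ)} {x : ι → ℝ}

noncomputable def partialDeriv (j : ι) (f : (ι → ℝ) → F) (x : ι → ℝ) : F :=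
  fderiv ℝ f x (Pi.single j 1)

lemma ContDiffOn.partialDeriv [Fintype ι] (hf : ContDiffOn ℝ ∞ f Ω) (hΩ : IsOpen Ω) (j : ι) :
    ContDiffOn ℝ ∞ (partialDeriv j f) Ω :=
  (ContinuousLinearMap.apply ℝ F (Pi.single j 1)).contDiff.comp_contDiffOn
    (hf.fderiv_of_isOpen hΩ le_rfl)

lemma partialDeriv_partialDeriv [Fintype ι] (hf : DifferentiableAt ℝ (fderiv ℝ f) x) (j k : ι) :
    partialDeriv k (partialDeriv j f) x
      = fderiv ℝ (fderiv ℝ f) x (Pi.single k 1) (Pi.single j 1) := by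
  change fderiv ℝ (fun y => fderiv ℝ f y (Pi.single j 1)) x _ = _
  simp [fderiv_clm_apply hf (differentiableAt_const _)]

lemma ContDiffAt.partialDeriv_comm [Fintype ι] (hf : ContDiffAt ℝ 2 f x) (j k : ι) :
    partialDeriv k (partialDeriv j f) x = partialDeriv j (partialDeriv k f) x := by
  have hdf : DifferentiableAt ℝ (fderiv ℝ f) x :=
    (hf.fderiv_right (m := 1) le_rfl).differentiableAt one_ne_zero
  rw [partialDeriv_partialDeriv hdf, partialDeriv_partialDeriv hdf,
    hf.isSymmSndFDerivAt (by simp)]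

lemma partialDeriv_apply [Fintype ι] {κ : Type*} [Fintype κ] {f : (ι → ℝ) → κ → ℝ}
    (hf : DifferentiableAt ℝ f x) (j : ι) (i : κ) :
    partialDeriv j (fun y => f y i) x = partialDeriv j f x i := by
  simp [partialDeriv, fderiv_apply hf]

lemma Filter.EventuallyEq.partialDeriv_eq (h : f =ᶠ[𝓝 x] g) (j : ι) :
    partialDeriv j f x = partialDeriv j g x := by
  rw [partialDeriv, partialDeriv, h.fderiv_eq]

lemma IsOpen.eqOn_of_partialDeriv_eq [Fintype ι] (hΩ : IsOpen Ω) (hΩc : IsPreconnected Ω)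
    (hf : DifferentiableOn ℝ f Ω) (hg : DifferentiableOn ℝ g Ω)
    (h : ∀ x ∈ Ω, ∀ j, partialDeriv j f x = partialDeriv j g x) {x₀ : ι → ℝ} (hx₀ : x₀ ∈ Ω)
    (h₀ : f x₀ = g x₀) : Set.EqOn f g Ω :=
  hΩ.eqOn_of_fderiv_eq hΩc hf hg (fun x hx => ContinuousLinearMap.coe_injective <|
    (Pi.basisFun ℝ ι).ext fun j => by simpa [partialDeriv] using h x hx j) hx₀ h₀

variable {f g : (ι → ℝ) → ℝ}

lemma partialDeriv_add [Fintype ι] (hf : DifferentiableAt ℝ f x) (hg : DifferentiableAt ℝ g x)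
    (j : ι) : partialDeriv j (fun y => f y + g y) x = partialDeriv j f x + partialDeriv j g x := by
  simp [partialDeriv, fderiv_fun_add hf hg]

lemma partialDeriv_sub [Fintype ι] (hf : DifferentiableAt ℝ f x) (hg : DifferentiableAt ℝ g x)
    (j : ι) : partialDeriv j (fun y => f y - g y) x = partialDeriv j f x - partialDeriv j g x := by
  simp [partialDeriv, fderiv_fun_sub hf hg]

lemma partialDeriv_const_mul [Fintype ι] (hf : DifferentiableAt ℝ f x) (c : ℝ) (j : ι) :
    partialDeriv j (fun y => c * f y) x = c * partialDeriv j f x := by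
  simp [partialDeriv, fderiv_const_mul hf]

lemma partialDeriv_const (c : ℝ) (j : ι) : partialDeriv j (fun _ => c) x = 0 := by
  simp [partialDeriv]

@[simp] lemma fderiv_coord_apply_single (y : ι → ℝ) (i j : ι) :
    fderiv ℝ (fun y : ι → ℝ => y i) y (Pi.single j 1) = if i = j then 1 else 0 := by
  simp [(hasFDerivAt_apply i y).fderiv, Pi.single_apply]

end PartialDeriv

section ConformalKillingField
variable {ι : Type*} [Fintype ι] [DecidableEq ι]

noncomputable def conformalKillingField (A : ι → ι → ℝ) (γ : ℝ) (s b : ι → ℝ) (y : ι → ℝ)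
    (i : ι) : ℝ :=
  ((∑ j, A i j * y j) + γ * y i) + s i * ((∑ j, y j * y j) / 2) - (∑ j, s j * y j) * y i + b i

noncomputable def conformalKillingDeriv (A : ι → ι → ℝ) (γ : ℝ) (s : ι → ℝ) (y : ι → ℝ)
    (i j : ι) : ℝ :=
  A i j + γ * (if i = j then 1 else 0) + s i * y j - s j * y i
    - (∑ k, s k * y k) * (if i = j then 1 else 0)

lemma partialDeriv_conformalKillingField (A : ι → ι → ℝ) (γ : ℝ) (s b y : ι → ℝ) (i j : ι) :
    partialDeriv j (fun y => conformalKillingField A γ s b y i) y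
      = conformalKillingDeriv A γ s y i j := by
  simp (disch := fun_prop) [partialDeriv, conformalKillingField, conformalKillingDeriv,
    fderiv_fun_add, fderiv_fun_sub, fderiv_fun_mul, fderiv_fun_sum, div_eq_mul_inv,
    Finset.sum_add_distrib]
  ring

lemma partialDeriv_conformalKillingDeriv (A : ι → ι → ℝ) (γ : ℝ) (s y : ι → ℝ) (i j k : ι) :
    partialDeriv k (fun y => conformalKillingDeriv A γ s y i j) y
      = s i * (if j = k then 1 else 0) - s j * (if i = k then 1 else 0)
        - s k * (if i = j then 1 else 0) := by
  simp (disch := fun_prop) only [partialDeriv, conformalKillingDeriv, fderiv_fun_add,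
    fderiv_fun_sub, fderiv_fun_mul, fderiv_fun_sum]
  by_cases hij : i = j <;> simp [hij]

end ConformalKillingField

section Deviatoric
variable {n : ℕ} {Ω : Set (Fin n → ℝ)} {u : (Fin n → ℝ) → Fin n → ℝ}

noncomputable def conformalFactor (u : (Fin n → ℝ) → Fin n → ℝ) (x : Fin n → ℝ) : ℝ :=
  divg u x / n

lemma pdc_eq_partialDeriv (j i : Fin n) : pdc j i u = fun x => partialDeriv j u x i := rfl

lemma pdc_add_pdc_of_Ed_eq_zero {x : Fin n → ℝ} (h : ∀ i j, Ed u x i j = 0) (i j : Fin n) :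
    pdc j i u x + pdc i j u x = 2 * (if i = j then 1 else 0) * conformalFactor u x := by
  have hij := h i j
  rw [Ed] at hij
  rw [conformalFactor]
  linear_combination 2 * hij

lemma contDiffOn_pdc (hΩ : IsOpen Ω) (hu : ContDiffOn ℝ ∞ u Ω) (j i : Fin n) :
    ContDiffOn ℝ ∞ (pdc j i u) Ω :=
  contDiffOn_pi.1 (hu.partialDeriv hΩ j) i

lemma contDiffOn_conformalFactor (hΩ : IsOpen Ω) (hu : ContDiffOn ℝ ∞ u Ω) :
    ContDiffOn ℝ ∞ (conformalFactor u) Ω :=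
  (ContDiffOn.sum fun i _ => contDiffOn_pdc hΩ hu i i).div_const _

lemma partialDeriv_pdc_of_Ed_eq_zero (hΩ : IsOpen Ω) (hu : ContDiffOn ℝ ∞ u Ω)
    (hEd : ∀ x ∈ Ω, ∀ i j, Ed u x i j = 0) {x : Fin n → ℝ} (hx : x ∈ Ω) (k j i : Fin n) :
    partialDeriv k (pdc j i u) x
      = (if i = j then 1 else 0) * partialDeriv k (conformalFactor u) x
        + (if i = k then 1 else 0) * partialDeriv j (conformalFactor u) x
        - (if j = k then 1 else 0) * partialDeriv i (conformalFactor u) x := by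
  have hpdc : ∀ j i, DifferentiableAt ℝ (pdc j i u) x := fun j i =>
    ((contDiffOn_pdc hΩ hu j i).contDiffAt (hΩ.mem_nhds hx)).differentiableAt (by simp)
  have hφ : DifferentiableAt ℝ (conformalFactor u) x :=
    ((contDiffOn_conformalFactor hΩ hu).contDiffAt (hΩ.mem_nhds hx)).differentiableAt (by simp)
  refine apply_eq_of_symm_of_add_swap (S := fun k j i => partialDeriv k (pdc j i u) x)
    (g := fun k => partialDeriv k (conformalFactor u) x) (fun k j i => ?_) (fun k j i => ?_) k j i
  · have hdu : ∀ j, DifferentiableAt ℝ (partialDeriv j u) x := fun j =>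
      ((hu.partialDeriv hΩ j).contDiffAt (hΩ.mem_nhds hx)).differentiableAt (by simp)
    simp only [pdc_eq_partialDeriv, partialDeriv_apply (hdu _)]
    rw [((hu.contDiffAt (hΩ.mem_nhds hx)).of_le ENat.LEInfty.out).partialDeriv_comm]
  · have hev : (fun y => pdc j i u y + pdc i j u y)
        =ᶠ[𝓝 x] fun y => 2 * (if i = j then 1 else 0) * conformalFactor u y :=
      eventually_of_mem (hΩ.mem_nhds hx) fun y hy => pdc_add_pdc_of_Ed_eq_zero (hEd y hy) i j
    have := hev.partialDeriv_eq k
    rwa [partialDeriv_add (hpdc j i) (hpdc i j), partialDeriv_const_mul hφ] at this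

lemma partialDeriv_partialDeriv_conformalFactor_eq_zero (hn : 3 ≤ n) (hΩ : IsOpen Ω)
    (hu : ContDiffOn ℝ ∞ u Ω) (hEd : ∀ x ∈ Ω, ∀ i j, Ed u x i j = 0) {x : Fin n → ℝ}
    (hx : x ∈ Ω) (k l : Fin n) :
    partialDeriv l (partialDeriv k (conformalFactor u)) x = 0 := by
  have hφ : ∀ m, DifferentiableAt ℝ (partialDeriv m (conformalFactor u)) x := fun m =>
    (((contDiffOn_conformalFactor hΩ hu).partialDeriv hΩ m).contDiffAt
      (hΩ.mem_nhds hx)).differentiableAt (by simp)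
  refine eq_zero_of_symm_kronecker (by simpa using hn)
    (H := fun l k => partialDeriv l (partialDeriv k (conformalFactor u)) x) (fun l k j i => ?_) l k
  have hpdc_second : ∀ k l, partialDeriv l (partialDeriv k (pdc j i u)) x
      = (if i = j then 1 else 0) * partialDeriv l (partialDeriv k (conformalFactor u)) x
        + (if i = k then 1 else 0) * partialDeriv l (partialDeriv j (conformalFactor u)) x
        - (if j = k then 1 else 0) * partialDeriv l (partialDeriv i (conformalFactor u)) x := by
    intro k l
    have hev : partialDeriv k (pdc j i u) =ᶠ[𝓝 x] fun y =>
        (if i = j then 1 else 0) * partialDeriv k (conformalFactor u) y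
          + (if i = k then 1 else 0) * partialDeriv j (conformalFactor u) y
          - (if j = k then 1 else 0) * partialDeriv i (conformalFactor u) y :=
      eventually_of_mem (hΩ.mem_nhds hx) fun y hy =>
        partialDeriv_pdc_of_Ed_eq_zero hΩ hu hEd hy k j i
    rw [hev.partialDeriv_eq, partialDeriv_sub (by fun_prop) (by fun_prop),
      partialDeriv_add (by fun_prop) (by fun_prop), partialDeriv_const_mul (hφ k),
      partialDeriv_const_mul (hφ j), partialDeriv_const_mul (hφ i)]
  rw [← hpdc_second k l, ← hpdc_second l k]
  exact (((contDiffOn_pdc hΩ hu j i).contDiffAt (hΩ.mem_nhds hx)).of_le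
    ENat.LEInfty.out).partialDeriv_comm k l

lemma partialDeriv_conformalFactor_eq (hn : 3 ≤ n) (hΩ : IsOpen Ω) (hΩc : IsPreconnected Ω)
    (hu : ContDiffOn ℝ ∞ u Ω) (hEd : ∀ x ∈ Ω, ∀ i j, Ed u x i j = 0) {x₀ x : Fin n → ℝ}
    (hx₀ : x₀ ∈ Ω) (hx : x ∈ Ω) (k : Fin n) :
    partialDeriv k (conformalFactor u) x = partialDeriv k (conformalFactor u) x₀ :=
  hΩ.eqOn_of_partialDeriv_eq hΩc (g := fun _ => partialDeriv k (conformalFactor u) x₀)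
    (((contDiffOn_conformalFactor hΩ hu).partialDeriv hΩ k).differentiableOn (by simp))
    (differentiableOn_const _)
    (fun y hy l => by
      rw [partialDeriv_partialDeriv_conformalFactor_eq_zero hn hΩ hu hEd hy, partialDeriv_const])
    hx₀ rfl hx

lemma exists_pdc_eq_conformalKillingDeriv (hn : 3 ≤ n) (hΩ : IsOpen Ω) (hΩc : IsPreconnected Ω)
    (hu : ContDiffOn ℝ ∞ u Ω) (hEd : ∀ x ∈ Ω, ∀ i j, Ed u x i j = 0) {x₀ : Fin n → ℝ}
    (hx₀ : x₀ ∈ Ω) :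
    ∃ (A : Fin n → Fin n → ℝ) (γ : ℝ) (s : Fin n → ℝ), (∀ i j, A i j = -A j i) ∧
      ∀ x ∈ Ω, ∀ i j, pdc j i u x = conformalKillingDeriv A γ s x i j := by
  set s : Fin n → ℝ := fun k => -partialDeriv k (conformalFactor u) x₀
  -- the only value of `γ` for which `A + Aᵀ = 2 (φ x₀ - γ + s ⬝ x₀) Id` vanishes
  set γ := conformalFactor u x₀ + ∑ k, s k * x₀ k
  set A : Fin n → Fin n → ℝ := fun i j => pdc j i u x₀ - conformalKillingDeriv 0 γ s x₀ i j
  refine ⟨A, γ, s, fun i j => ?_, fun x hx i j => ?_⟩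
  · have := pdc_add_pdc_of_Ed_eq_zero (hEd x₀ hx₀) i j
    rcases eq_or_ne i j with rfl | hij
    · simp only [A, conformalKillingDeriv, γ, Pi.zero_apply, if_true] at this ⊢
      linarith
    · simp only [A, conformalKillingDeriv, Pi.zero_apply, if_neg hij, if_neg hij.symm] at this ⊢
      linarith
  refine hΩ.eqOn_of_partialDeriv_eq hΩc (f := pdc j i u)
    (g := fun x => conformalKillingDeriv A γ s x i j)
    ((contDiffOn_pdc hΩ hu j i).differentiableOn (by simp))
    (by unfold conformalKillingDeriv; fun_prop) (fun y hy k => ?_) hx₀ ?_ hx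
  · rw [partialDeriv_pdc_of_Ed_eq_zero hΩ hu hEd hy, partialDeriv_conformalKillingDeriv,
      partialDeriv_conformalFactor_eq hn hΩ hΩc hu hEd hx₀ hy k,
      partialDeriv_conformalFactor_eq hn hΩ hΩc hu hEd hx₀ hy j,
      partialDeriv_conformalFactor_eq hn hΩ hΩc hu hEd hx₀ hy i]
    simp only [s]
    ring
  · simp only [A, conformalKillingDeriv, Pi.zero_apply]
    ring

end Deviatoric

/-- kernel structure: if `n ≥ 3`, `Ω ⊆ ℝⁿ` is open and connected,
`u ∈ C^∞(Ω; ℝⁿ)` and `ℰ_d u = 0` on `Ω`, then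
`u(y) = (A + γ·Id) y + s·|y|²/2 − (s·y) y + b` on `Ω` for some skew-symmetric `A`,
`γ ∈ ℝ` and `s, b ∈ ℝⁿ`. -/
theorem deviatoric_kernel_structure {n : ℕ} (hn : 3 ≤ n) (Ω : Set (Fin n → ℝ))
    (hΩopen : IsOpen Ω) (hΩconn : IsConnected Ω)
    (u : (Fin n → ℝ) → (Fin n → ℝ)) (hu : ContDiffOn ℝ (⊤ : ℕ∞) u Ω)
    (hEd : ∀ x ∈ Ω, ∀ i j, Ed u x i j = 0) :
    ∃ (A : Fin n → Fin n → ℝ) (γ : ℝ) (s b : Fin n → ℝ),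
      (∀ i j, A i j = - A j i) ∧
      ∀ y ∈ Ω, ∀ i, u y i =
        ((∑ j, A i j * y j) + γ * y i) + s i * ((∑ j, y j * y j) / 2)
          - (∑ j, s j * y j) * y i + b i := by
  obtain ⟨x₀, hx₀⟩ := hΩconn.nonempty
  obtain ⟨A, γ, s, hA, hDu⟩ :=
    exists_pdc_eq_conformalKillingDeriv hn hΩopen hΩconn.isPreconnected hu hEd hx₀
  set b : Fin n → ℝ := fun i => u x₀ i - conformalKillingField A γ s 0 x₀ i
  refine ⟨A, γ, s, b, hA, fun y hy i => ?_⟩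
  have hud : DifferentiableOn ℝ u Ω := hu.differentiableOn (by simp)
  refine hΩopen.eqOn_of_partialDeriv_eq hΩconn.isPreconnected (differentiableOn_pi.1 hud i)
    (g := fun y => conformalKillingField A γ s b y i)
    (by unfold conformalKillingField; fun_prop) (fun x hx j => ?_) hx₀ ?_ hy
  · rw [partialDeriv_apply (hud.differentiableAt (hΩopen.mem_nhds hx)),
      partialDeriv_conformalKillingField]
    exact hDu x hx i j
  · simp only [b, conformalKillingField, Pi.zero_apply]
    ring
end

section
/- Let n ≥ 3. Define, for F ∈ C^∞(Ω; M_sym0), the fourth-order differential operator 𝒜 by (𝒜(F))_{jk} := Σ_{i,ℓ=1}^n (∂_{iijℓ}F_{kℓ} + ∂_{iikℓ}F_{ℓj}) − Σ_{i,ℓ=1}^n ∂_{iiℓℓ}F_{jk} − ((n−2)/(n−1))·Σ_{i,ℓ=1}^n ∂_{iℓjk}F_{iℓ} − (δ_{jk}/(n−1))·Σ_{i,ℓ,m=1}^n ∂_{iiℓm}F_{ℓm}, for j,k = 1,…,n. Then for every u ∈ C^∞(ℝⁿ;ℝⁿ) one has 𝒜(ℰ_d u) = 0, i.e. 𝒜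 annihilates the deviatoric symmetric gradient. -/
/-!
Partial derivatives of smooth functions commute, so a fifth-order derivative `∂_s u_m(x)` depends
only on the multiset `s` of differentiation directions; call it `D(s, m)`. Every entry of
`𝒜(ℰ_d u)` is then a fixed linear combination of values of `D`. Writing out `ℰ_d` and contracting
the Kronecker deltas, the five sums in `𝒜` reduce to the four quantities
`A₁ = ∑ D({i,i,l,l,j}, k)`, `A₂ = ∑ D({i,i,l,l,k}, j)`, `B = ∑ D({i,i,l,j,k}, l)` and
`C = ∑ D({i,i,l,l,m}, m)` (on the Fourier side `|ξ|⁴ ξ_j û_k`, `|ξ|⁴ ξ_k û_j`,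
`|ξ|² ξ_j ξ_k (ξ·û)` and `|ξ|⁴ (ξ·û)`), and the coefficients `(n-2)/(n-1)` and `1/(n-1)` are
exactly those making the combination vanish.
-/

open MeasureTheory Filter Topology

/-- Partial derivative `∂_j f` of a scalar function on `ℝⁿ`. -/
noncomputable def pds {n : ℕ} (j : Fin n) (f : (Fin n → ℝ) → ℝ) : (Fin n → ℝ) → ℝ :=
  fun x => fderiv ℝ f x (Pi.single j 1)

open Finset
open scoped ContDiff

variable {n : ℕ}

section Smooth

variable {f g : (Fin n → ℝ) → ℝ}

lemma ContDiff.pds (hf : ContDiff ℝ ∞ f) (i : Fin n) : ContDiff ℝ ∞ (pds i f) :=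
  (contDiff_infty_iff_fderiv.1 hf).2.clm_apply contDiff_const

lemma pds_comm (hf : ContDiff ℝ ∞ f) (i j : Fin n) : pds i (pds j f) = pds j (pds i f) := by
  funext x
  have hsymm : IsSymmSndFDerivAt ℝ f x := hf.contDiffAt.isSymmSndFDerivAt <| by
    rw [minSmoothness_of_isRCLikeNormedField]; exact WithTop.coe_le_coe.2 le_top
  have hdf : Differentiable ℝ (fderiv ℝ f) :=
    (contDiff_infty_iff_fderiv.1 (contDiff_infty_iff_fderiv.1 hf).2).1
  have hsnd (v w : Fin n → ℝ) :
      fderiv ℝ (fun y => fderiv ℝ f y v) x w = fderiv ℝ (fderiv ℝ f) x w v := by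
    simp [fderiv_clm_apply (hdf x) (differentiableAt_const v)]
  change fderiv ℝ (fun y => fderiv ℝ f y _) x _ = fderiv ℝ (fun y => fderiv ℝ f y _) x _
  rw [hsnd, hsnd, hsymm]

lemma pds_add (hf : ContDiff ℝ ∞ f) (hg : ContDiff ℝ ∞ g) (i : Fin n) :
    pds i (f + g) = pds i f + pds i g := by
  funext x
  simp [pds, fderiv_add (hf.differentiable (by simp) x) (hg.differentiable (by simp) x)]

lemma pds_const_smul (c : ℝ) (i : Fin n) : pds i (c • f) = c • pds i f := by
  funext x
  simp [pds, fderiv_const_smul_field]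

lemma pds_sum {ι : Type*} (s : Finset ι) {F : ι → (Fin n → ℝ) → ℝ}
    (hF : ∀ m ∈ s, ContDiff ℝ ∞ (F m)) (i : Fin n) :
    pds i (∑ m ∈ s, F m) = ∑ m ∈ s, pds i (F m) := by
  funext x
  simp [pds, fderiv_sum fun m hm => (hF m hm).differentiable (by simp) x]

lemma pds_apply_eq_pdc {u : (Fin n → ℝ) → (Fin n → ℝ)} (hu : ContDiff ℝ ∞ u) (i j : Fin n) :
    pds j (u · i) = pdc j i u := by
  funext x
  simp [pds, pdc, fderiv_apply (hu.differentiable (by simp) x)]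

end Smooth

noncomputable def iteratedPds (l : List (Fin n)) (f : (Fin n → ℝ) → ℝ) : (Fin n → ℝ) → ℝ :=
  l.foldr pds f

/-- Sorting only picks a representative: for smooth `f` every ordering of `s` gives the same
derivative (`iteratedPds_perm`). -/
noncomputable def multisetPds (s : Multiset (Fin n)) (f : (Fin n → ℝ) → ℝ) :
    (Fin n → ℝ) → ℝ :=
  iteratedPds s.sort f

section IteratedPds

variable {f g : (Fin n → ℝ) → ℝ} {l l' : List (Fin n)}

@[simp] lemma iteratedPds_cons (i : Fin n) : iteratedPds (i :: l) f = pds i (iteratedPds l f) :=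
  rfl

lemma ContDiff.iteratedPds (hf : ContDiff ℝ ∞ f) (l : List (Fin n)) :
    ContDiff ℝ ∞ (iteratedPds l f) := by
  induction l with
  | nil => exact hf
  | cons i l ih => exact ih.pds i

lemma iteratedPds_perm (hf : ContDiff ℝ ∞ f) (h : l.Perm l') :
    iteratedPds l f = iteratedPds l' f := by
  induction h with
  | nil => rfl
  | cons i _ ih => simp [ih]
  | swap i j l => exact pds_comm (hf.iteratedPds l) j i
  | trans _ _ ih ih' => exact ih.trans ih'

lemma iteratedPds_eq_multisetPds (hf : ContDiff ℝ ∞ f) (l : List (Fin n)) :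
    iteratedPds l f = multisetPds l f :=
  iteratedPds_perm hf (List.mergeSort_perm l _).symm

lemma iteratedPds_pds (hf : ContDiff ℝ ∞ f) (i : Fin n) (l : List (Fin n)) :
    iteratedPds l (pds i f) = iteratedPds (i :: l) f :=
  (List.foldr_append ..).symm.trans (iteratedPds_perm hf (List.perm_append_singleton i l))

lemma iteratedPds_add (hf : ContDiff ℝ ∞ f) (hg : ContDiff ℝ ∞ g) (l : List (Fin n)) :
    iteratedPds l (f + g) = iteratedPds l f + iteratedPds l g := by
  induction l with
  | nil => rfl
  | cons i l ih => simp [ih, pds_add (hf.iteratedPds l) (hg.iteratedPds l)]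

lemma iteratedPds_const_smul (c : ℝ) (l : List (Fin n)) :
    iteratedPds l (c • f) = c • iteratedPds l f := by
  induction l with
  | nil => rfl
  | cons i l ih => simp [ih, pds_const_smul]

lemma iteratedPds_sum {ι : Type*} (s : Finset ι) {F : ι → (Fin n → ℝ) → ℝ}
    (hF : ∀ m ∈ s, ContDiff ℝ ∞ (F m)) (l : List (Fin n)) :
    iteratedPds l (∑ m ∈ s, F m) = ∑ m ∈ s, iteratedPds l (F m) := by
  induction l with
  | nil => rfl
  | cons i l ih => simp [ih, pds_sum s (fun m hm => (hF m hm).iteratedPds l)]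

end IteratedPds

section Symbol

/-- If `D s m = ∂_s u_m(x)`, then `devSymGrad D l a b = ∂_l (ℰ_d u)_{ab}(x)` (`iteratedPds_Ed`). -/
noncomputable def devSymGrad (D : Multiset (Fin n) → Fin n → ℝ) (l : List (Fin n))
    (a b : Fin n) : ℝ :=
  (D ↑(b :: l) a + D ↑(a :: l) b) / 2 - (if a = b then 1 else 0) / n * ∑ m, D ↑(m :: l) m

/-- `(𝒜 F)_{jk}(x)`, where `F l a b` stands for `∂_l F_{ab}(x)`. -/
noncomputable def annihilatorOp (F : List (Fin n) → Fin n → Fin n → ℝ) (j k : Fin n) : ℝ :=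
  (∑ i, ∑ l, (F [i, i, j, l] k l + F [i, i, k, l] l j))
    - (∑ i, ∑ l, F [i, i, l, l] j k)
    - (((n : ℝ) - 2) / ((n : ℝ) - 1)) * (∑ i, ∑ l, F [i, l, j, k] i l)
    - ((if j = k then (1 : ℝ) else 0) / ((n : ℝ) - 1)) * (∑ i, ∑ l, ∑ m, F [i, i, l, m] l m)

theorem annihilatorOp_devSymGrad (hn : 2 ≤ n) (D : Multiset (Fin n) → Fin n → ℝ)
    (j k : Fin n) : annihilatorOp (devSymGrad D) j k = 0 := by
  set A₁ := ∑ i, ∑ l, D ↑[i, i, l, l, j] k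
  set A₂ := ∑ i, ∑ l, D ↑[i, i, l, l, k] j
  set B := ∑ i, ∑ l, D ↑[i, i, l, j, k] l
  set C := ∑ i, ∑ l, ∑ m, D ↑[i, i, l, l, m] m
  -- The two sums that only match `B` and `C` after relabelling the summation indices.
  have hB : ∑ i, ∑ l, D ↑[l, i, l, j, k] i = B := by
    rw [sum_comm]
    simp only [B, ← Multiset.cons_coe, Multiset.coe_nil, Multiset.cons_swap]
  have hC : ∑ i, ∑ l, ∑ m, D ↑[m, i, i, l, m] l = C := by
    refine sum_congr rfl fun i _ => ?_
    rw [sum_comm]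
    simp only [← Multiset.cons_coe, Multiset.coe_nil, Multiset.cons_swap]
  have h₁ : ∑ i, ∑ l, devSymGrad D [i, i, j, l] k l = A₁ / 2 + (1 / 2 - 1 / n) * B := by
    simp only [devSymGrad, add_div, sum_sub_distrib, sum_add_distrib, ← sum_div]
    simp only [A₁, B, ← Multiset.cons_coe, Multiset.coe_nil, Multiset.cons_swap]
    simp only [ite_div, zero_div, ite_mul, zero_mul, sum_ite_eq, mem_univ, Multiset.cons_swap,
      if_true, ← mul_sum]
    ring
  have h₂ : ∑ i, ∑ l, devSymGrad D [i, i, k, l] l j = A₂ / 2 + (1 / 2 - 1 / n) * B := by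
    simp only [devSymGrad, add_div, sum_sub_distrib, sum_add_distrib, ← sum_div]
    simp only [A₂, B, ← Multiset.cons_coe, Multiset.coe_nil, Multiset.cons_swap]
    simp only [ite_div, zero_div, ite_mul, zero_mul, sum_ite_eq', mem_univ, Multiset.cons_swap,
      if_true, ← mul_sum]
    ring
  have h₃ : ∑ i, ∑ l, devSymGrad D [i, i, l, l] j k
      = (A₁ + A₂) / 2 - (if j = k then 1 else 0) / n * C := by
    simp only [devSymGrad, add_div, sum_sub_distrib, sum_add_distrib, ← sum_div]
    simp only [A₁, A₂, C, ← Multiset.cons_coe, Multiset.coe_nil, Multiset.cons_swap]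
    simp only [ite_div, zero_div, ite_mul, zero_mul, sum_ite_irrel, ← mul_sum, sum_const_zero]
    ring
  have h₄ : ∑ i, ∑ l, devSymGrad D [i, l, j, k] i l = (1 - 1 / n) * B := by
    simp only [devSymGrad, add_div, sum_sub_distrib, sum_add_distrib, ← sum_div, hB]
    simp only [B, ← Multiset.cons_coe, Multiset.coe_nil, Multiset.cons_swap]
    simp only [ite_div, zero_div, ite_mul, zero_mul, sum_ite_eq, mem_univ, if_true, ← mul_sum]
    ring
  have h₅ : ∑ i, ∑ l, ∑ m, devSymGrad D [i, i, l, m] l m = (1 - 1 / n) * C := by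
    simp only [devSymGrad, add_div, sum_sub_distrib, sum_add_distrib, ← sum_div, hC]
    simp only [C, ← Multiset.cons_coe, Multiset.coe_nil, Multiset.cons_swap]
    simp only [ite_div, zero_div, ite_mul, zero_mul, sum_ite_eq, mem_univ, if_true, ← mul_sum]
    ring
  have hn₀ : (n : ℝ) ≠ 0 := by positivity
  have hn₁ : (n : ℝ) - 1 ≠ 0 := by
    have : (2 : ℝ) ≤ n := by exact_mod_cast hn
    linarith
  simp only [annihilatorOp, sum_add_distrib, h₁, h₂, h₃, h₄, h₅]
  field_simp
  ring

end Symbol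

section DeviatoricGradient

variable {u : (Fin n → ℝ) → (Fin n → ℝ)}

lemma iteratedPds_Ed (hu : ContDiff ℝ ∞ u) (x : Fin n → ℝ) (l : List (Fin n)) (a b : Fin n) :
    iteratedPds l (fun y => Ed u y a b) x
      = devSymGrad (fun s m => multisetPds s (u · m) x) l a b := by
  have hu' (m : Fin n) : ContDiff ℝ ∞ (u · m) := (contDiff_apply ℝ ℝ m).comp hu
  have hEd : (fun y => Ed u y a b) = (2⁻¹ : ℝ) • (pds b (u · a) + pds a (u · b))
      + (-(if a = b then 1 else 0) / n : ℝ) • ∑ m, pds m (u · m) := by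
    funext y
    simp only [Ed, divg, Pi.add_apply, Pi.smul_apply, smul_eq_mul, Finset.sum_apply,
      pds_apply_eq_pdc hu]
    ring
  have hsym : ContDiff ℝ ∞ ((2⁻¹ : ℝ) • (pds b (u · a) + pds a (u · b))) :=
    (((hu' a).pds b).add ((hu' b).pds a)).const_smul (2⁻¹ : ℝ)
  have hdiv : ContDiff ℝ ∞ (∑ m, pds m (u · m)) := by
    simpa only [← Finset.sum_fn] using ContDiff.sum fun m _ => (hu' m).pds m
  have htr : ContDiff ℝ ∞ ((-(if a = b then 1 else 0) / n : ℝ) • ∑ m, pds m (u · m)) :=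
    hdiv.const_smul (-(if a = b then 1 else 0) / n : ℝ)
  rw [hEd, iteratedPds_add hsym htr, iteratedPds_const_smul, iteratedPds_const_smul,
    iteratedPds_add ((hu' a).pds b) ((hu' b).pds a), iteratedPds_sum _ fun m _ => (hu' m).pds m]
  simp only [iteratedPds_pds (hu' _), iteratedPds_eq_multisetPds (hu' _), smul_add, Pi.add_apply,
    Pi.smul_apply, smul_eq_mul, Finset.sum_apply, devSymGrad]
  ring

end DeviatoricGradient

/-- the explicit fourth-order operator `𝒜` annihilates the deviatoric
symmetric gradient: for every `u ∈ C^∞(ℝⁿ;ℝⁿ)`, `𝒜(ℰ_d u) = 0`, where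
`(𝒜 F)_{jk} = Σ_{i,ℓ}(∂_{iijℓ}F_{kℓ} + ∂_{iikℓ}F_{ℓj}) − Σ_{i,ℓ}∂_{iiℓℓ}F_{jk}
 − ((n−2)/(n−1))Σ_{i,ℓ}∂_{iℓjk}F_{iℓ} − (δ_{jk}/(n−1))Σ_{i,ℓ,m}∂_{iiℓm}F_{ℓm}`. -/
theorem annihilator_of_deviatoric_gradient {n : ℕ} (hn : 3 ≤ n)
    (u : (Fin n → ℝ) → (Fin n → ℝ)) (hu : ContDiff ℝ (⊤ : ℕ∞) u)
    (x : Fin n → ℝ) (j k : Fin n) :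
    (∑ i, ∑ l, (pds i (pds i (pds j (pds l (fun y => Ed u y k l)))) x
        + pds i (pds i (pds k (pds l (fun y => Ed u y l j)))) x))
      - (∑ i, ∑ l, pds i (pds i (pds l (pds l (fun y => Ed u y j k)))) x)
      - (((n : ℝ) - 2) / ((n : ℝ) - 1)) *
          (∑ i, ∑ l, pds i (pds l (pds j (pds k (fun y => Ed u y i l)))) x)
      - ((if j = k then (1 : ℝ) else 0) / ((n : ℝ) - 1)) *
          (∑ i, ∑ l, ∑ m, pds i (pds i (pds l (pds m (fun y => Ed u y l m)))) x) = 0 := by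
  have hF : (fun l a b => iteratedPds l (fun y => Ed u y a b) x)
      = devSymGrad (fun s m => multisetPds s (u · m) x) :=
    funext fun l => funext fun a => funext fun b => iteratedPds_Ed hu x l a b
  change annihilatorOp (fun l a b => iteratedPds l (fun y => Ed u y a b) x) j k = 0
  rw [hF]
  exact annihilatorOp_devSymGrad (by omega) _ j k
end

section
/- Let n ≥ 4, α ∈ ℝ, β ≠ 0, η, ϑ ∈ ℝ. If there exists P ∈ C²(ℝⁿ;ℝⁿ) solving ℰ_d P = (e₁⊗_{ℰ_d}(αe₁ + βe₂))·[η·x₁(αx₁ + βx₂) − ϑ·Σ_{j=3}^n x_j²], then necessarily η = 2αϑ/β². -/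
/-- Euclidean dot product on `Fin n → ℝ`. -/
def dotp {n : ℕ} (a b : Fin n → ℝ) : ℝ := ∑ i, a i * b i

/-- `a ⊗_{ℰ_d} b := a⊙b − ((a·b)/n)·Id`. -/
noncomputable def edT (n : ℕ) (a b : Fin n → ℝ) (i j : Fin n) : ℝ :=
  (a i * b j + a j * b i) / 2 - (dotp a b / (n : ℝ)) * (if i = j then 1 else 0)

/-!
Write `B = ∂₂P₂` (indices of the paper) and `f` for the quadratic load. The equation says
`∂ᵢPᵢ = B` for `i = 2, 3, 4`, `∂₁P₁ = B + α f`, `∂₂P₁ + ∂₁P₂ = β f`, and `∂ⱼPᵢ + ∂ᵢPⱼ = 0` for the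
other pairs `i ≠ j` in `{1, …, 4}`. The Saint-Venant compatibility condition of the pair `{i, j}`
reads `∂ᵢ²B + ∂ⱼ²B = c_ij`, with `c₁₂ = ηβ²`, `c₁₃ = 2αϑ`, `c₂₄ = c₃₄ = 0`; the last two give
`∂₂²B = ∂₃²B`, and then the first two give `ηβ² = 2αϑ`.

Since `P` is only `C²`, `B` is only `C¹`, so these conditions are used in integrated form: `∂ⱼ²B`
becomes the increment of `∂ⱼB` across a unit step in direction `eⱼ`, and the condition for `{i, j}`
is `Δᵢ Δⱼ p = Δⱼ Δᵢ p` for `p = ∂ⱼPᵢ`, each side unfolded by the fundamental theorem of calculus.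
Averaging over the unit cube spanned by `e₁, …, e₄` makes the four relations comparable.
-/

open MeasureTheory fwdDiff

lemma Continuous.fwdDiff {M G : Type*} [AddCommMonoid M] [TopologicalSpace M] [ContinuousAdd M]
    [AddCommGroup G] [TopologicalSpace G] [IsTopologicalAddGroup G] {g : M → G}
    (hg : Continuous g) (v : M) : Continuous (Δ_[v] g) :=
  (hg.comp (continuous_add_const v)).sub hg

section LineAverage

variable {E : Type*} [NormedAddCommGroup E] [NormedSpace ℝ E]

lemma fderiv_fderiv_apply_comm {F : Type*} [NormedAddCommGroup F] [NormedSpace ℝ F]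
    {φ : E → F} (hφ : ContDiff ℝ 2 φ) (x v w : E) :
    fderiv ℝ (fun y => fderiv ℝ φ y v) x w = fderiv ℝ (fun y => fderiv ℝ φ y w) x v := by
  have hd : Differentiable ℝ (fderiv ℝ φ) :=
    (hφ.fderiv_right (m := 1) (by norm_num)).differentiable one_ne_zero
  simp only [fderiv_clm_apply (hd x) (differentiableAt_const _)]
  simpa using (hφ.contDiffAt.isSymmSndFDerivAt (by simp)) w v

lemma ContDiff.fderiv_right_apply {φ : E → ℝ} (hφ : ContDiff ℝ 2 φ) (v : E) :
    ContDiff ℝ 1 (fun y => fderiv ℝ φ y v) :=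
  (hφ.fderiv_right (m := 1) (by norm_num)).clm_apply contDiff_const

noncomputable def lineAverage (v : E) (g : E → ℝ) (x : E) : ℝ :=
  ∫ s in (0:ℝ)..1, g (x + s • v)

variable {g : E → ℝ}

lemma continuous_lineAverage (hg : Continuous g) (v : E) : Continuous (lineAverage v g) :=
  intervalIntegral.continuous_parametric_intervalIntegral_of_continuous'
    (f := fun x (s : ℝ) => g (x + s • v)) (hg.comp (by fun_prop)) 0 1

lemma intervalIntegrable_comp_line (hg : Continuous g) (x v : E) :
    IntervalIntegrable (fun s : ℝ => g (x + s • v)) volume 0 1 :=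
  (hg.comp (by fun_prop)).intervalIntegrable 0 1

lemma lineAverage_comm (hg : Continuous g) (v w : E) :
    lineAverage v (lineAverage w g) = lineAverage w (lineAverage v g) := by
  funext x
  have hc : Continuous (Function.uncurry fun s t : ℝ => g (x + s • v + t • w)) :=
    hg.comp (by fun_prop)
  have hint : IntegrableOn (Function.uncurry fun s t : ℝ => g (x + s • v + t • w))
      (Set.uIoc 0 1 ×ˢ Set.uIoc 0 1) :=
    (hc.continuousOn.integrableOn_compact (isCompact_uIcc.prod isCompact_uIcc)).mono_set
      (Set.prod_mono Set.uIoc_subset_uIcc Set.uIoc_subset_uIcc)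
  simp only [lineAverage]
  simp_rw [add_right_comm _ (_ • w)]
  exact intervalIntegral_intervalIntegral_swap hint

lemma lineAverage_const_sub (hg : Continuous g) (v : E) (c : ℝ) :
    lineAverage v (fun y => c - g y) = fun x => c - lineAverage v g x := by
  funext x
  simp [lineAverage, intervalIntegral.integral_sub intervalIntegrable_const
    (intervalIntegrable_comp_line hg x v)]

lemma lineAverage_add_const (hg : Continuous g) (v : E) (c : ℝ) :
    lineAverage v (fun y => g y + c) = fun x => lineAverage v g x + c := by
  funext x
  simp [lineAverage, intervalIntegral.integral_add (intervalIntegrable_comp_line hg x v)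
    intervalIntegrable_const]

lemma lineAverage_fwdDiff (hg : Continuous g) (v w : E) :
    lineAverage v (Δ_[w] g) = Δ_[w] (lineAverage v g) := by
  funext x
  simp only [lineAverage, fwdDiff]
  rw [← intervalIntegral.integral_sub (intervalIntegrable_comp_line hg _ v)
    (intervalIntegrable_comp_line hg x v)]
  congr 1; funext s; rw [add_right_comm]

lemma lineAverage_fderiv {F : E → ℝ} (hF : ContDiff ℝ 1 F) (v : E) :
    lineAverage v (fun y => fderiv ℝ F y v) = Δ_[v] F := by
  funext x
  have hderiv : ∀ s ∈ Set.uIcc (0:ℝ) 1,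
      HasDerivAt (fun t : ℝ => F (x + t • v)) (fderiv ℝ F (x + s • v) v) s := by
    intro s _
    have hline : HasDerivAt (fun t : ℝ => x + t • v) v s := by
      simpa using ((hasDerivAt_id s).smul_const v).const_add x
    exact ((hF.differentiable one_ne_zero) _).hasFDerivAt.comp_hasDerivAt s hline
  have hcont : Continuous fun s : ℝ => fderiv ℝ F (x + s • v) v := by
    have := hF.continuous_fderiv one_ne_zero
    fun_prop
  simpa [fwdDiff, lineAverage] using
    intervalIntegral.integral_eq_sub_of_hasDerivAt hderiv (hcont.intervalIntegrable 0 1)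

/-- Both sides equal `Δ_[b] (Δ_[a] F)`: a weak form of `∂_b ∂_a F = ∂_a ∂_b F`. -/
lemma lineAverage_fwdDiff_fderiv_comm {F : E → ℝ} (hF : ContDiff ℝ 1 F) (a b : E) :
    lineAverage a (Δ_[b] fun y => fderiv ℝ F y a)
      = lineAverage b (Δ_[a] fun y => fderiv ℝ F y b) := by
  have hc : ∀ v, Continuous fun y => fderiv ℝ F y v := fun v =>
    (hF.continuous_fderiv one_ne_zero).clm_apply continuous_const
  rw [lineAverage_fwdDiff (hc a), lineAverage_fwdDiff (hc b), lineAverage_fderiv hF,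
    lineAverage_fderiv hF]
  funext x
  simp only [fwdDiff]
  rw [add_right_comm]; ring

lemma lineAverage_add_eq_of_add_eq {F G : E → ℝ} (hF : Continuous F) (hG : Continuous G) {C : ℝ}
    (h : ∀ x, F x + G x = C) (v x : E) : lineAverage v F x + lineAverage v G x = C := by
  rw [lineAverage, lineAverage, ← intervalIntegral.integral_add
    (intervalIntegrable_comp_line hF x v) (intervalIntegrable_comp_line hG x v)]
  simp [h]

lemma continuous_fwdDiff_fderiv {B : E → ℝ} (hB : ContDiff ℝ 1 B) (v : E) :
    Continuous (Δ_[v] fun y => fderiv ℝ B y v) :=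
  ((hB.continuous_fderiv one_ne_zero).clm_apply continuous_const).fwdDiff v

/-- Integrated form of the compatibility condition `∂_b² B + ∂_a² B = ∂_a ∂_b ψ - ∂_b² φ` for the
symmetric gradient of `(uₐ, u_b)`. -/
lemma lineAverage_fwdDiff_fderiv_add_eq {a b : E} {uₐ u_b B φ ψ : E → ℝ} {c₁ c₂ : ℝ}
    (hua : ContDiff ℝ 2 uₐ) (hub : ContDiff ℝ 2 u_b) (hφ : Differentiable ℝ φ)
    (hψ : Differentiable ℝ ψ)
    (ha : ∀ y, fderiv ℝ uₐ y a = B y + φ y) (hb : ∀ y, fderiv ℝ u_b y b = B y)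
    (hab : ∀ y, fderiv ℝ uₐ y b + fderiv ℝ u_b y a = ψ y)
    (hφc : ∀ y, (Δ_[b] fun y => fderiv ℝ φ y b) y = c₁)
    (hψc : ∀ y, (Δ_[a] fun y => fderiv ℝ ψ y b) y = c₂) (x : E) :
    lineAverage a (Δ_[b] fun y => fderiv ℝ B y b) x
      + lineAverage b (Δ_[a] fun y => fderiv ℝ B y a) x = c₂ - c₁ := by
  have hB : B = fun y => fderiv ℝ u_b y b := funext fun y => (hb y).symm
  have hB1 : ContDiff ℝ 1 B := hB ▸ hub.fderiv_right_apply b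
  have hBd : Differentiable ℝ B := hB1.differentiable one_ne_zero
  set p : E → ℝ := fun y => fderiv ℝ uₐ y b
  have hpa : ∀ y, fderiv ℝ p y a = fderiv ℝ B y b + fderiv ℝ φ y b := by
    intro y
    rw [fderiv_fderiv_apply_comm hua, show (fun y => fderiv ℝ uₐ y a) = fun y => B y + φ y from
      funext ha, fderiv_fun_add (hBd y) (hφ y)]
    rfl
  have hpb : ∀ y, fderiv ℝ p y b = fderiv ℝ ψ y b - fderiv ℝ B y a := by
    intro y
    have hp : p = fun y => ψ y - fderiv ℝ u_b y a := funext fun y => by rw [← hab]; ring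
    rw [hp, fderiv_fun_sub (hψ y) ((hub.fderiv_right_apply a).differentiable one_ne_zero y),
      sub_apply, fderiv_fderiv_apply_comm hub, ← hB]
  have hswap := congrFun (lineAverage_fwdDiff_fderiv_comm (hua.fderiv_right_apply b) a b) x
  have e₁ : (Δ_[b] fun y => fderiv ℝ p y a) = fun y => (Δ_[b] fun y => fderiv ℝ B y b) y + c₁ := by
    funext y; rw [← hφc y]; simp only [fwdDiff, hpa]; ring
  have e₂ : (Δ_[a] fun y => fderiv ℝ p y b) = fun y => c₂ - (Δ_[a] fun y => fderiv ℝ B y a) y := by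
    funext y; rw [← hψc y]; simp only [fwdDiff, hpb]; ring
  rw [e₁, e₂, lineAverage_add_const (continuous_fwdDiff_fderiv hB1 b),
    lineAverage_const_sub (continuous_fwdDiff_fderiv hB1 a)] at hswap
  linarith

/-- Averaging each relation over the two remaining directions turns it into a relation between
the averages of `D v₀, …, D v₃` over the cube spanned by `v₀, …, v₃`. -/
lemma sub_eq_sub_of_lineAverage_relations {D : E → E → ℝ} (hD : ∀ v, Continuous (D v))
    {v₀ v₁ v₂ v₃ : E} {C₀₁ C₀₂ C₁₃ C₂₃ : ℝ}
    (R₀₁ : ∀ x, lineAverage v₀ (D v₁) x + lineAverage v₁ (D v₀) x = C₀₁)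
    (R₀₂ : ∀ x, lineAverage v₀ (D v₂) x + lineAverage v₂ (D v₀) x = C₀₂)
    (R₁₃ : ∀ x, lineAverage v₁ (D v₃) x + lineAverage v₃ (D v₁) x = C₁₃)
    (R₂₃ : ∀ x, lineAverage v₂ (D v₃) x + lineAverage v₃ (D v₂) x = C₂₃) :
    C₀₁ - C₀₂ = C₁₃ - C₂₃ := by
  have hL : ∀ v w, Continuous (lineAverage v (D w)) := fun v w => continuous_lineAverage (hD w) v
  have smear : ∀ {a b : E} {C : ℝ}, (∀ x, lineAverage a (D b) x + lineAverage b (D a) x = C) →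
      ∀ c d, lineAverage c (lineAverage d (lineAverage a (D b))) 0
        + lineAverage c (lineAverage d (lineAverage b (D a))) 0 = C := fun h c d =>
    lineAverage_add_eq_of_add_eq (continuous_lineAverage (hL _ _) d)
      (continuous_lineAverage (hL _ _) d) (lineAverage_add_eq_of_add_eq (hL _ _) (hL _ _) h d) c 0
  have comm : ∀ v w u, lineAverage v (lineAverage w (D u)) = lineAverage w (lineAverage v (D u)) :=
    fun v w u => lineAverage_comm (hD u) v w
  have comm' : ∀ v w z u, lineAverage v (lineAverage w (lineAverage z (D u)))
      = lineAverage w (lineAverage v (lineAverage z (D u))) :=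
    fun v w z u => lineAverage_comm (hL z u) v w
  have S₀₁ := smear R₀₁ v₂ v₃
  have S₀₂ := smear R₀₂ v₁ v₃
  have S₁₃ := smear R₁₃ v₀ v₂
  have S₂₃ := smear R₂₃ v₀ v₁
  rw [comm v₃ v₀, comm' v₂ v₀, comm v₃ v₁, comm' v₂ v₁] at S₀₁
  rw [comm v₃ v₀, comm' v₁ v₀, comm v₃ v₂] at S₀₂
  rw [comm v₂ v₁] at S₁₃
  linarith

theorem mul_sq_eq_of_strain_eqs {v₀ v₁ v₂ v₃ : E} {u₀ u₁ u₂ u₃ f : E → ℝ} {α β η ϑ : ℝ}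
    (hu₀ : ContDiff ℝ 2 u₀) (hu₁ : ContDiff ℝ 2 u₁) (hu₂ : ContDiff ℝ 2 u₂)
    (hu₃ : ContDiff ℝ 2 u₃) (hf : Differentiable ℝ f)
    (hf₀₁ : ∀ y, (Δ_[v₀] fun y => fderiv ℝ f y v₁) y = η * β)
    (hf₁₁ : ∀ y, (Δ_[v₁] fun y => fderiv ℝ f y v₁) y = 0)
    (hf₂₂ : ∀ y, (Δ_[v₂] fun y => fderiv ℝ f y v₂) y = -(2 * ϑ))
    (h₀₀ : ∀ y, fderiv ℝ u₀ y v₀ = fderiv ℝ u₁ y v₁ + α * f y)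
    (h₂₂ : ∀ y, fderiv ℝ u₂ y v₂ = fderiv ℝ u₁ y v₁)
    (h₃₃ : ∀ y, fderiv ℝ u₃ y v₃ = fderiv ℝ u₁ y v₁)
    (h₀₁ : ∀ y, fderiv ℝ u₀ y v₁ + fderiv ℝ u₁ y v₀ = β * f y)
    (h₀₂ : ∀ y, fderiv ℝ u₀ y v₂ + fderiv ℝ u₂ y v₀ = 0)
    (h₁₃ : ∀ y, fderiv ℝ u₁ y v₃ + fderiv ℝ u₃ y v₁ = 0)
    (h₂₃ : ∀ y, fderiv ℝ u₂ y v₃ + fderiv ℝ u₃ y v₂ = 0) :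
    η * β ^ 2 = 2 * α * ϑ := by
  set B : E → ℝ := fun y => fderiv ℝ u₁ y v₁
  have hB : ContDiff ℝ 1 B := hu₁.fderiv_right_apply v₁
  set D : E → E → ℝ := fun v => Δ_[v] fun y => fderiv ℝ B y v
  have hD : ∀ v, Continuous (D v) := continuous_fwdDiff_fderiv hB
  have hfc : ∀ c v w y, (Δ_[w] fun y => fderiv ℝ (fun y => c * f y) y v) y
      = c * (Δ_[w] fun y => fderiv ℝ f y v) y := by
    intro c v w y
    simp only [fwdDiff, fderiv_const_mul (hf _), smul_apply, smul_eq_mul]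
    ring
  have h₁₁ : ∀ y, fderiv ℝ u₁ y v₁ = B y + 0 := fun y => (add_zero _).symm
  have h₂₂' : ∀ y, fderiv ℝ u₂ y v₂ = B y + 0 := fun y => (h₂₂ y).trans (add_zero _).symm
  have h0 : ∀ v w y, (Δ_[w] fun y => fderiv ℝ (fun _ : E => (0 : ℝ)) y v) y = 0 := by simp
  have R₀₁ := lineAverage_fwdDiff_fderiv_add_eq (B := B) hu₀ hu₁ (hf.const_mul α)
    (hf.const_mul β) h₀₀ (fun _ => rfl) h₀₁ (fun y => by rw [hfc, hf₁₁]) (fun y => by rw [hfc, hf₀₁])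
  have R₀₂ := lineAverage_fwdDiff_fderiv_add_eq (B := B) (ψ := fun _ => 0) hu₀ hu₂ (hf.const_mul α)
    (differentiable_const 0) h₀₀ h₂₂ h₀₂ (fun y => by rw [hfc, hf₂₂]) (h0 _ _)
  have R₁₃ := lineAverage_fwdDiff_fderiv_add_eq (ψ := fun _ => 0) hu₁ hu₃ (differentiable_const 0)
    (differentiable_const 0) h₁₁ h₃₃ h₁₃ (h0 _ _) (h0 _ _)
  have R₂₃ := lineAverage_fwdDiff_fderiv_add_eq (ψ := fun _ => 0) hu₂ hu₃ (differentiable_const 0)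
    (differentiable_const 0) h₂₂' h₃₃ h₂₃ (h0 _ _) (h0 _ _)
  linarith [sub_eq_sub_of_lineAverage_relations hD R₀₁ R₀₂ R₁₃ R₂₃]

end LineAverage

lemma fderiv_quadratic_apply {ι : Type*} [Fintype ι] (i₀ i₁ : ι) (S : Finset ι)
    (α β η ϑ : ℝ) (y v : ι → ℝ) :
    fderiv ℝ (fun x : ι → ℝ => η * x i₀ * (α * x i₀ + β * x i₁) - ϑ * ∑ j ∈ S, x j ^ 2) y v
      = η * v i₀ * (α * y i₀ + β * y i₁) + η * y i₀ * (α * v i₀ + β * v i₁)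
        - ϑ * ∑ j ∈ S, 2 * y j * v j := by
  have hp (k : ι) : HasFDerivAt (fun x : ι → ℝ => x k) (ContinuousLinearMap.proj k) y :=
    hasFDerivAt_apply (𝕜 := ℝ) k y
  have h : HasFDerivAt
      (fun x : ι → ℝ => η * x i₀ * (α * x i₀ + β * x i₁) - ϑ * ∑ j ∈ S, x j ^ 2) _ y :=
    (((hp i₀).const_mul η).mul (((hp i₀).const_mul α).add ((hp i₁).const_mul β))).sub
      ((HasFDerivAt.fun_sum fun j _ => (hp j).pow 2).const_mul ϑ)
  rw [h.fderiv]
  simp [Finset.mul_sum]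
  ring

section Coordinates

variable {n : ℕ} {P : (Fin n → ℝ) → (Fin n → ℝ)}

lemma pdc_eq_fderiv_apply {x : Fin n → ℝ} (hP : DifferentiableAt ℝ P x) (i j : Fin n) :
    pdc j i P x = fderiv ℝ (fun y => P y i) x (Pi.single j 1) := by
  rw [fderiv_apply hP]; rfl

variable {a b : Fin n → ℝ} {f : (Fin n → ℝ) → ℝ}

lemma fderiv_apply_add_of_Ed_eq (hP : Differentiable ℝ P)
    (hEd : ∀ x i j, Ed P x i j = edT n a b i j * f x) (i j : Fin n) (hij : i ≠ j) (x) :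
    fderiv ℝ (fun y => P y i) x (Pi.single j 1) + fderiv ℝ (fun y => P y j) x (Pi.single i 1)
      = (a i * b j + a j * b i) * f x := by
  have h := hEd x i j
  simp only [Ed, edT, if_neg hij, mul_zero, sub_zero] at h
  rw [← pdc_eq_fderiv_apply (hP x), ← pdc_eq_fderiv_apply (hP x)]
  linarith

lemma fderiv_apply_sub_of_Ed_eq (hP : Differentiable ℝ P)
    (hEd : ∀ x i j, Ed P x i j = edT n a b i j * f x) (i j : Fin n) (x) :
    fderiv ℝ (fun y => P y i) x (Pi.single i 1) - fderiv ℝ (fun y => P y j) x (Pi.single j 1)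
      = (a i * b i - a j * b j) * f x := by
  have hi := hEd x i i
  have hj := hEd x j j
  simp only [Ed, edT, ↓reduceIte, mul_one] at hi hj
  rw [← pdc_eq_fderiv_apply (hP x), ← pdc_eq_fderiv_apply (hP x)]
  linear_combination hi - hj

end Coordinates

/-- for `n ≥ 4` and `β ≠ 0`, if there exists `P ∈ C²(ℝⁿ;ℝⁿ)` solving
`ℰ_d P = (e₁⊗_{ℰ_d}(αe₁+βe₂))·[η x₁(αx₁+βx₂) − ϑ Σ_{j≥3} x_j²]`, then `η = 2αϑ/β²`.
(Coordinates are `0`-indexed: `i₀, i₁` are the indices `1, 2` of the paper.) -/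
theorem polynomial_solvability_constraint {n : ℕ} (hn : 4 ≤ n) (i₀ i₁ : Fin n)
    (h₀ : (i₀ : ℕ) = 0) (h₁ : (i₁ : ℕ) = 1)
    (α β η ϑ : ℝ) (hβ : β ≠ 0)
    (hex : ∃ P : (Fin n → ℝ) → (Fin n → ℝ), ContDiff ℝ 2 P ∧
      ∀ x i j, Ed P x i j =
        edT n (Pi.single i₀ 1) (α • (Pi.single i₀ 1 : Fin n → ℝ)
            + β • (Pi.single i₁ 1 : Fin n → ℝ)) i j *
          (η * x i₀ * (α * x i₀ + β * x i₁)
            - ϑ * ∑ jj ∈ Finset.univ.filter (fun jj : Fin n => 2 ≤ (jj : ℕ)), (x jj) ^ 2)) :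
    η = 2 * α * ϑ / β ^ 2 := by
  obtain ⟨P, hP, hEd⟩ := hex
  set S := Finset.univ.filter (fun jj : Fin n => 2 ≤ (jj : ℕ))
  set f : (Fin n → ℝ) → ℝ := fun x => η * x i₀ * (α * x i₀ + β * x i₁) - ϑ * ∑ jj ∈ S, x jj ^ 2
  let i₂ : Fin n := ⟨2, by omega⟩
  let i₃ : Fin n := ⟨3, by omega⟩
  have h01 : i₀ ≠ i₁ := Fin.ne_of_val_ne (by omega)
  have h02 : i₀ ≠ i₂ := Fin.ne_of_val_ne (by simp [i₂, h₀])
  have h03 : i₀ ≠ i₃ := Fin.ne_of_val_ne (by simp [i₃, h₀])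
  have h12 : i₁ ≠ i₂ := Fin.ne_of_val_ne (by simp [i₂, h₁])
  have h13 : i₁ ≠ i₃ := Fin.ne_of_val_ne (by simp [i₃, h₁])
  have h23 : i₂ ≠ i₃ := Fin.ne_of_val_ne (by simp [i₂, i₃])
  have hPd : Differentiable ℝ P := hP.differentiable (by norm_num)
  have hoff := fderiv_apply_add_of_Ed_eq (f := f) hPd hEd
  have hdiag := fderiv_apply_sub_of_Ed_eq (f := f) hPd hEd
  have key := mul_sq_eq_of_strain_eqs (v₀ := Pi.single i₀ 1) (v₁ := Pi.single i₁ 1)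
    (v₂ := Pi.single i₂ 1) (v₃ := Pi.single i₃ 1) (f := f) (α := α) (β := β) (η := η) (ϑ := ϑ)
    (contDiff_pi.mp hP i₀) (contDiff_pi.mp hP i₁) (contDiff_pi.mp hP i₂) (contDiff_pi.mp hP i₃)
    (by fun_prop)
    (fun y => by simp [fwdDiff, f, fderiv_quadratic_apply, Pi.single_apply, h01, S, h₁]; ring)
    (fun y => by simp [fwdDiff, f, fderiv_quadratic_apply, Pi.single_apply, h01, S, h₁])
    (fun y => by simp [fwdDiff, f, fderiv_quadratic_apply, Pi.single_apply, h02, h12, S, i₂]; ring)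
    (fun y => sub_eq_iff_eq_add'.mp (by simpa [Pi.single_apply, h01] using hdiag i₀ i₁ y))
    (fun y => sub_eq_zero.mp (by simpa [Pi.single_apply, h01.symm, h02.symm] using hdiag i₂ i₁ y))
    (fun y => sub_eq_zero.mp (by simpa [Pi.single_apply, h01.symm, h03.symm] using hdiag i₃ i₁ y))
    (fun y => by simpa [Pi.single_apply, h01] using hoff i₀ i₁ h01 y)
    (fun y => by simpa [Pi.single_apply, h02, h12] using hoff i₀ i₂ h02 y)
    (fun y => by simpa [Pi.single_apply, h01, h03, h13] using hoff i₁ i₃ h13 y)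
    (fun y => by simpa [Pi.single_apply, h02, h03, h12, h13, h23] using hoff i₂ i₃ h23 y)
  field_simp
  linarith
end

section
/- Let ℓ ∈ ℝⁿ and let (s_ε) be a family of functions of the form s_ε(x) = ψ_ε(x·ℓ) for measurable functions ψ_ε ∈ BV_loc(ℝ). If s_ε → s in L¹_loc(ℝⁿ) as ε → 0, then there exists a measurable function ψ ∈ L¹_loc(ℝ) such that s(x) = ψ(x·ℓ) for almost every x ∈ ℝⁿ. -/
open MeasureTheory Filter Topology

/-- A function `f : ℝ → ℝ` has locally bounded variation. -/
def BVloc (f : ℝ → ℝ) : Prop := ∀ a b : ℝ, eVariationOn f (Set.Icc a b) ≠ ⊤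

open Set
open scoped ENNReal

/-!
Along a sequence `εₖ → 0` whose errors on the balls of radius `k` are summable,
`ψ_{εₖ}(x·ℓ) → s(x)` for a.e. `x`, so `s(x) = ψ(x·ℓ)` a.e. for the pointwise limit
`ψ(t) := lim ψ_{εₖ}(t)`, which is measurable. Local integrability of `ψ` is inherited from `s`:
if `ℓ i ≠ 0`, the linear automorphism `x ↦ update x i (x·ℓ)` maps Lebesgue measure to a
positive multiple of itself, so the integral of `g(x·ℓ)` over the (compact) preimage of a cube
is a positive multiple of the integral of `g` over an interval.
-/

theorem BoundedVariationOn.isBounded_image {α E : Type*} [LinearOrder α] [PseudoMetricSpace E]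
    {f : α → E} {s : Set α} (hf : BoundedVariationOn f s) : Bornology.IsBounded (f '' s) :=
  Metric.isBounded_iff.2 ⟨_, by
    rintro _ ⟨x, hx, rfl⟩ _ ⟨y, hy, rfl⟩
    exact hf.dist_le hx hy⟩

theorem BVloc.integrableOn_comp {X : Type*} [TopologicalSpace X] [MeasurableSpace X]
    [OpensMeasurableSpace X] [T2Space X] {μ : Measure X} [IsFiniteMeasureOnCompacts μ]
    {f : ℝ → ℝ} (hf : BVloc f) (hfm : Measurable f) {T : X → ℝ} (hT : Continuous T)
    {K : Set X} (hK : IsCompact K) : IntegrableOn (fun x => f (T x)) K μ := by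
  obtain ⟨a, b, hab⟩ := bddBelow_bddAbove_iff_subset_Icc.1
    (isBounded_iff_bddBelow_bddAbove.1 (hK.image hT).isBounded)
  obtain ⟨M, hM⟩ := (BoundedVariationOn.isBounded_image (hf a b)).exists_norm_le
  refine Measure.integrableOn_of_bounded hK.measure_lt_top.ne
    (hfm.comp hT.measurable).aestronglyMeasurable (M := M) ?_
  filter_upwards [ae_restrict_mem hK.measurableSet] with x hx
  exact hM _ ⟨T x, hab ⟨x, hx, rfl⟩, rfl⟩

theorem tendsto_lintegral_enorm_of_tendsto_integral_abs {α ι : Type*} [MeasurableSpace α]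
    {μ : Measure α} {l : Filter ι} {F : ι → α → ℝ} (hF : ∀ᶠ i in l, Integrable (F i) μ)
    (h : Tendsto (fun i => ∫ x, |F i x| ∂μ) l (𝓝 0)) :
    Tendsto (fun i => ∫⁻ x, ‖F i x‖ₑ ∂μ) l (𝓝 0) := by
  rw [← ENNReal.ofReal_zero]
  refine (ENNReal.tendsto_ofReal h).congr' ?_
  filter_upwards [hF] with i hi
  exact ofReal_integral_norm_eq_lintegral_enorm hi

theorem ae_tendsto_of_tsum_lintegral_ne_top {α : Type*} [MeasurableSpace α] {μ : Measure α}
    {f : ℕ → α → ℝ} {g : α → ℝ} (hf : ∀ k, AEMeasurable (f k) μ) (hg : AEMeasurable g μ)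
    (h : ∑' k, ∫⁻ x, ‖f k x - g x‖ₑ ∂μ ≠ ∞) :
    ∀ᵐ x ∂μ, Tendsto (fun k => f k x) atTop (𝓝 (g x)) := by
  have hm : ∀ k, AEMeasurable (fun x => ‖f k x - g x‖ₑ) μ := fun k => ((hf k).sub hg).enorm
  rw [← lintegral_tsum hm] at h
  filter_upwards [ae_lt_top' (AEMeasurable.tsum hm) h] with x hx
  rw [tendsto_iff_edist_tendsto_0]
  simpa only [edist_dist, Real.dist_eq, ← Real.enorm_eq_ofReal_abs] using
    ENNReal.tendsto_atTop_zero_of_tsum_ne_top hx.ne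

theorem exists_seq_ae_tendsto_of_tendsto_setLIntegral {α ι : Type*} [MeasurableSpace α]
    {μ : Measure α} {l : Filter ι} [l.NeBot] {P : ι → Prop} (hP : ∀ᶠ i in l, P i)
    {F : ι → α → ℝ} {g : α → ℝ} (hF : ∀ i, P i → AEMeasurable (F i) μ) (hg : AEMeasurable g μ)
    {K : ℕ → Set α} (hK : Monotone K) (hKcover : ⋃ R, K R = univ)
    (h : ∀ R, Tendsto (fun i => ∫⁻ x in K R, ‖F i x - g x‖ₑ ∂μ) l (𝓝 0)) :
    ∃ e : ℕ → ι, (∀ k, P (e k)) ∧ ∀ᵐ x ∂μ, Tendsto (fun k => F (e k) x) atTop (𝓝 (g x)) := by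
  have hsmall : ∀ k, ∀ᶠ i in l, P i ∧ ∫⁻ x in K k, ‖F i x - g x‖ₑ ∂μ < 2⁻¹ ^ k := fun k =>
    hP.and ((h k).eventually_lt_const (ENNReal.pow_pos (by norm_num) k))
  choose e heP he using fun k => (hsmall k).exists
  refine ⟨e, heP, ?_⟩
  rw [← Measure.restrict_univ (μ := μ), ← hKcover, ae_restrict_iUnion_iff]
  intro R
  have hshift : ∀ k, ∫⁻ x in K R, ‖F (e (k + R)) x - g x‖ₑ ∂μ ≤ 2⁻¹ ^ k := fun k =>
    calc ∫⁻ x in K R, ‖F (e (k + R)) x - g x‖ₑ ∂μ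
        ≤ ∫⁻ x in K (k + R), ‖F (e (k + R)) x - g x‖ₑ ∂μ := lintegral_mono_set (hK le_add_self)
      _ ≤ 2⁻¹ ^ (k + R) := (he _).le
      _ ≤ 2⁻¹ ^ k := pow_le_pow_right_of_le_one' (by norm_num) le_self_add
  have hsum : ∑' k, ∫⁻ x in K R, ‖F (e (k + R)) x - g x‖ₑ ∂μ ≠ ∞ :=
    ne_top_of_le_ne_top (by rw [ENNReal.tsum_geometric_two]; exact ENNReal.ofNat_ne_top)
      (ENNReal.tsum_le_tsum hshift)
  filter_upwards [ae_tendsto_of_tsum_lintegral_ne_top (fun k => (hF _ (heP _)).restrict)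
    hg.restrict hsum] with x hx
  exact (tendsto_add_atTop_iff_nat R).1 hx

theorem setLIntegral_univ_pi_comp_eval {ι : Type*} [Fintype ι] [DecidableEq ι]
    {α : ι → Type*} [∀ j, MeasureSpace (α j)] [∀ j, SigmaFinite (volume : Measure (α j))]
    (s : ∀ j, Set (α j)) (i : ι) {g : α i → ℝ≥0∞} (hg : Measurable g) :
    ∫⁻ y in univ.pi s, g (y i) = (∏ j ∈ Finset.univ.erase i, volume (s j)) * ∫⁻ t in s i, g t := by
  rw [volume_pi, Measure.restrict_pi_pi, ← lintegral_map hg (measurable_pi_apply i),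
    Measure.pi_map_eval, lintegral_smul_measure]
  simp only [Measure.restrict_apply_univ, smul_eq_mul]

section DotProduct

variable {n : ℕ}

def dotpLinearMap (ℓ : Fin n → ℝ) : (Fin n → ℝ) →ₗ[ℝ] ℝ where
  toFun x := dotp x ℓ
  map_add' x y := by simp only [dotp, Pi.add_apply, add_mul, Finset.sum_add_distrib]
  map_smul' c x := by
    simp only [dotp, Pi.smul_apply, smul_eq_mul, mul_assoc, Finset.mul_sum, RingHom.id_apply]

@[simp]
theorem dotpLinearMap_apply (ℓ x : Fin n → ℝ) : dotpLinearMap ℓ x = dotp x ℓ := rfl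

def dotpUpdate (ℓ : Fin n → ℝ) (i : Fin n) : (Fin n → ℝ) →ₗ[ℝ] (Fin n → ℝ) :=
  LinearMap.pi (Function.update LinearMap.proj i (dotpLinearMap ℓ))

@[simp]
theorem dotpUpdate_apply_self (ℓ : Fin n → ℝ) (i : Fin n) (x : Fin n → ℝ) :
    dotpUpdate ℓ i x i = dotp x ℓ := by
  simp [dotpUpdate]

theorem dotpUpdate_apply_of_ne (ℓ : Fin n → ℝ) {i j : Fin n} (hj : j ≠ i)
    (x : Fin n → ℝ) : dotpUpdate ℓ i x j = x j := by
  simp [dotpUpdate, hj]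

theorem dotpUpdate_injective {ℓ : Fin n → ℝ} {i : Fin n} (hi : ℓ i ≠ 0) :
    Function.Injective (dotpUpdate ℓ i) := by
  refine (injective_iff_map_eq_zero _).2 fun x hx => ?_
  have hxj : ∀ j, j ≠ i → x j = 0 := fun j hj => by
    simpa [dotpUpdate_apply_of_ne ℓ hj] using congr_fun hx j
  have hdot : dotp x ℓ = x i * ℓ i :=
    Finset.sum_eq_single i (fun j _ hj => by rw [hxj j hj, zero_mul]) (by simp)
  have hxi : x i = 0 := by
    simpa [hdot, hi] using congr_fun hx i
  funext j
  rcases eq_or_ne j i with rfl | hj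
  exacts [hxi, hxj j hj]

theorem exists_isCompact_setLIntegral_comp_dotp_eq {ℓ : Fin n → ℝ} (hℓ : ℓ ≠ 0)
    {a b : ℝ} (hab : a < b) :
    ∃ K : Set (Fin n → ℝ), IsCompact K ∧ ∃ C : ℝ≥0∞, C ≠ 0 ∧ ∀ g : ℝ → ℝ≥0∞, Measurable g →
      ∫⁻ x in K, g (dotp x ℓ) = C * ∫⁻ t in Icc a b, g t := by
  obtain ⟨i, hi⟩ := Function.ne_iff.1 hℓ
  set Φ := dotpUpdate ℓ i
  have hinj : Function.Injective Φ := dotpUpdate_injective hi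
  obtain ⟨c, hc, hmap⟩ := Φ.exists_map_addHaar_eq_smul_addHaar volume volume
    (LinearMap.injective_iff_surjective.1 hinj)
  set cube : Set (Fin n → ℝ) := univ.pi fun _ => Icc a b
  have hcube : MeasurableSet cube := MeasurableSet.univ_pi fun _ => measurableSet_Icc
  have hK : IsCompact (Φ ⁻¹' cube) :=
    (Φ.isClosedEmbedding_of_injective (LinearMap.ker_eq_bot.2 hinj)).isCompact_preimage
      (isCompact_univ_pi fun _ => isCompact_Icc)
  have hC : c * ∏ j ∈ Finset.univ.erase i, volume (Icc a b) ≠ 0 :=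
    mul_ne_zero hc.ne' (Finset.prod_ne_zero_iff.2 fun _ _ => by simpa using hab)
  refine ⟨Φ ⁻¹' cube, hK, _, hC, fun g hg => ?_⟩
  calc ∫⁻ x in Φ ⁻¹' cube, g (dotp x ℓ)
      = ∫⁻ x in Φ ⁻¹' cube, g (Φ x i) := by simp only [Φ, dotpUpdate_apply_self]
    _ = ∫⁻ y in cube, g (y i) ∂(volume.map Φ) :=
        (setLIntegral_map hcube (hg.comp (measurable_pi_apply i))
          Φ.continuous_of_finiteDimensional.measurable).symm
    _ = _ := by
        rw [hmap, Measure.restrict_smul, lintegral_smul_measure, smul_eq_mul,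
          setLIntegral_univ_pi_comp_eval _ i hg, mul_assoc]

theorem locallyIntegrable_of_locallyIntegrable_comp_dotp {ℓ : Fin n → ℝ} (hℓ : ℓ ≠ 0)
    {g : ℝ → ℝ} (hg : Measurable g) (h : LocallyIntegrable (fun x => g (dotp x ℓ))) :
    LocallyIntegrable g := by
  refine locallyIntegrable_iff.2 fun k hk => ?_
  obtain ⟨r, hr, hkr⟩ := hk.isBounded.subset_ball_lt 0 0
  obtain ⟨K, hK, C, hC, hKC⟩ := exists_isCompact_setLIntegral_comp_dotp_eq hℓ (neg_lt_self hr)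
  have hkI : k ⊆ Icc (-r) r := by
    simpa [Real.closedBall_eq_Icc] using hkr.trans Metric.ball_subset_closedBall
  refine IntegrableOn.mono_set ⟨hg.aestronglyMeasurable, ?_⟩ hkI
  have hfin := (h.integrableOn_isCompact hK).2
  rw [hasFiniteIntegral_iff_enorm, hKC _ hg.enorm] at hfin
  exact hasFiniteIntegral_iff_enorm.2 (ENNReal.lt_top_of_mul_ne_top_right hfin.ne hC)

end DotProduct

/-- if `s_ε(x) = ψ_ε(x·ℓ)` with `ψ_ε` measurable and in `BV_loc(ℝ)`,
and `s_ε → s` in `L¹_loc(ℝⁿ)` as `ε → 0⁺`, then `s(x) = ψ(x·ℓ)` a.e. for some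
measurable `ψ ∈ L¹_loc(ℝ)`. -/
theorem one_dimensional_structure_limit {n : ℕ} (ℓ : Fin n → ℝ)
    (ψ : ℝ → ℝ → ℝ) (s : (Fin n → ℝ) → ℝ)
    (hψmeas : ∀ ε ∈ Set.Ioi (0 : ℝ), Measurable (ψ ε))
    (hψBV : ∀ ε ∈ Set.Ioi (0 : ℝ), BVloc (ψ ε))
    (hs : LocallyIntegrable s (volume : Measure (Fin n → ℝ)))
    (hconv : ∀ K : Set (Fin n → ℝ), IsCompact K →
      Tendsto (fun ε : ℝ => ∫ x in K, |ψ ε (dotp x ℓ) - s x|)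
        (nhdsWithin 0 (Set.Ioi 0)) (nhds 0)) :
    ∃ ψ₀ : ℝ → ℝ, Measurable ψ₀ ∧ LocallyIntegrable ψ₀ (volume : Measure ℝ) ∧
      ∀ᵐ x : Fin n → ℝ, s x = ψ₀ (dotp x ℓ) := by
  have hL : Continuous fun x : Fin n → ℝ => dotp x ℓ :=
    (dotpLinearMap ℓ).continuous_of_finiteDimensional
  have hconv' : ∀ R : ℕ, Tendsto
      (fun ε => ∫⁻ x in Metric.closedBall 0 R, ‖ψ ε (dotp x ℓ) - s x‖ₑ) (𝓝[>] 0) (𝓝 0) :=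
    fun R => tendsto_lintegral_enorm_of_tendsto_integral_abs
      (eventually_mem_nhdsWithin.mono fun ε hε =>
        ((hψBV ε hε).integrableOn_comp (hψmeas ε hε) hL (isCompact_closedBall 0 R)).sub
          (hs.integrableOn_isCompact (isCompact_closedBall 0 R)))
      (hconv _ (isCompact_closedBall 0 R))
  obtain ⟨e, he, hlim⟩ := exists_seq_ae_tendsto_of_tendsto_setLIntegral eventually_mem_nhdsWithin
    (fun ε hε => ((hψmeas ε hε).comp hL.measurable).aemeasurable)
    hs.aestronglyMeasurable.aemeasurable
    (fun _ _ h => Metric.closedBall_subset_closedBall (Nat.cast_le.2 h))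
    (Metric.iUnion_closedBall_nat 0) hconv'
  set ψ₁ : ℝ → ℝ := fun t => limUnder atTop fun k => ψ (e k) t
  have hψ₁ : Measurable ψ₁ :=
    (StronglyMeasurable.limUnder fun k => (hψmeas _ (he k)).stronglyMeasurable).measurable
  have hsψ₁ : ∀ᵐ x, s x = ψ₁ (dotp x ℓ) := hlim.mono fun x hx => hx.limUnder_eq.symm
  -- for `ℓ = 0` only the value `ψ₁ 0` is pinned down, and `ψ₁` may fail to be locally integrable
  rcases eq_or_ne ℓ 0 with rfl | hℓ
  · exact ⟨fun _ => ψ₁ 0, measurable_const, locallyIntegrable_const _, by simpa [dotp] using hsψ₁⟩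
  · exact ⟨ψ₁, hψ₁, locallyIntegrable_of_locallyIntegrable_comp_dotp hℓ hψ₁ (hs.congr hsψ₁), hsψ₁⟩
end
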